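/- arXiv:1204.1349 — 2 statements merged into one kernel-verified Lean document; each statement's English description precedes it below -/
import Mathlib

section
/- Let G = (V,E) be a P(2,1)-graph that is not equal to K₂³ and has no vertex of degree 2. Then there exist a vertex v of degree 3 and an edge e not incident to v such that G − e is (2,2)-tight. -/
/-! ### Multigraphs: finite vertex set `V`, finite edge set `E`; each edge `e` has
endpoints `src e` and `dst e` (loops and parallel edges are allowed). -/

structure Multigraph (V E : Type) where
  src : E → V
  dst : E → V

namespace Multigraph

variable {V E : Type}

/-- `i(X)`: the number of edges both of whose endpoints lie in `X`. -/
def iCount [Fintype E] [DecidableEq V] (G : Multigraph V E) (X : Finset V) : ℕ :=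
  (Finset.univ.filter fun e => G.src e ∈ X ∧ G.dst e ∈ X).card

/-- The degree of a vertex (a loop contributes 2). -/
def degree [Fintype E] [DecidableEq V] (G : Multigraph V E) (v : V) : ℕ :=
  (Finset.univ.filter fun e => G.src e = v).card +
    (Finset.univ.filter fun e => G.dst e = v).card

/-- The set of neighbours of a vertex. -/
def neighborSet (G : Multigraph V E) (v : V) : Set V :=
  {w | ∃ e, (G.src e = v ∧ G.dst e = w) ∨ (G.src e = w ∧ G.dst e = v)}

/-- `(k,ℓ)`-sparsity: `i(X) ≤ k|X| − ℓ` for every `X ⊆ V` spanning at least one edge. -/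
def Sparse [Fintype E] [DecidableEq V] (G : Multigraph V E) (k l : ℤ) : Prop :=
  ∀ X : Finset V, (∃ e, G.src e ∈ X ∧ G.dst e ∈ X) →
    (G.iCount X : ℤ) ≤ k * (X.card : ℤ) - l

/-- `(k,ℓ)`-tightness: `(k,ℓ)`-sparse and `|E| = k|V| − ℓ`. -/
def Tight [Fintype V] [Fintype E] [DecidableEq V] (G : Multigraph V E) (k l : ℤ) : Prop :=
  G.Sparse k l ∧ (Fintype.card E : ℤ) = k * (Fintype.card V : ℤ) - l

/-- Delete a single edge. -/
def deleteEdge (G : Multigraph V E) (e₀ : E) : Multigraph V {e : E // e ≠ e₀} :=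
  ⟨fun e => G.src e.1, fun e => G.dst e.1⟩

/-- Delete a vertex together with all edges incident to it. -/
def deleteVertex (G : Multigraph V E) (v : V) :
    Multigraph {w : V // w ≠ v} {e : E // G.src e ≠ v ∧ G.dst e ≠ v} :=
  ⟨fun e => ⟨G.src e.1, e.2.1⟩, fun e => ⟨G.dst e.1, e.2.2⟩⟩

/-- Add one new edge with endpoints `u` and `w`. -/
def addEdge (G : Multigraph V E) (u w : V) : Multigraph V (E ⊕ Unit) :=
  ⟨Sum.elim G.src fun _ => u, Sum.elim G.dst fun _ => w⟩

/-- The subgraph induced by a set of vertices `X`. -/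
def induce (G : Multigraph V E) (X : Finset V) :
    Multigraph {v : V // v ∈ X} {e : E // G.src e ∈ X ∧ G.dst e ∈ X} :=
  ⟨fun e => ⟨G.src e.1, e.2.1⟩, fun e => ⟨G.dst e.1, e.2.2⟩⟩

/-- `G` is a `P(2,1)`-graph: `(2,1)`-tight and some edge-deleted graph is `(2,2)`-tight. -/
def IsP21 [Fintype V] [Fintype E] [DecidableEq V] [DecidableEq E] (G : Multigraph V E) : Prop :=
  G.Tight 2 1 ∧ ∃ e : E, (G.deleteEdge e).Tight 2 2

/-- `G` is a `(2,2)`-circuit: `|E| = 2|V| − 1` and every edge-deleted graph is `(2,2)`-tight. -/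
def IsCircuit22 [Fintype V] [Fintype E] [DecidableEq V] [DecidableEq E]
    (G : Multigraph V E) : Prop :=
  (Fintype.card E : ℤ) = 2 * (Fintype.card V : ℤ) - 1 ∧
    ∀ e : E, (G.deleteEdge e).Tight 2 2

/-- `X` is an over-critical set (`i(X) = 2|X| − 1`) of minimum cardinality. -/
def IsMinOverCritical [Fintype E] [DecidableEq V] (G : Multigraph V E) (X : Finset V) : Prop :=
  (G.iCount X : ℤ) = 2 * (X.card : ℤ) - 1 ∧
    ∀ Y : Finset V, (G.iCount Y : ℤ) = 2 * (Y.card : ℤ) - 1 → X.card ≤ Y.card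

/-- `G` is (a copy of) `K₂³`: two distinct vertices joined by three parallel edges. -/
def IsK23 [Fintype E] (G : Multigraph V E) : Prop :=
  ∃ a b : V, a ≠ b ∧ (∀ v : V, v = a ∨ v = b) ∧ Fintype.card E = 3 ∧
    ∀ e : E, (G.src e = a ∧ G.dst e = b) ∨ (G.src e = b ∧ G.dst e = a)

/-- Adjacency via an edge belonging to the edge subset `F`. -/
def AdjOn (G : Multigraph V E) (F : Set E) (u w : V) : Prop :=
  ∃ e ∈ F, (G.src e = u ∧ G.dst e = w) ∨ (G.src e = w ∧ G.dst e = u)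

/-- Connectivity of the multigraph. -/
def Connected (G : Multigraph V E) : Prop :=
  Nonempty V ∧ ∀ u w : V, Relation.ReflTransGen (G.AdjOn Set.univ) u w

/-- 2-edge-connectivity: connected, and still connected after deleting any one edge. -/
def TwoEdgeConnected (G : Multigraph V E) : Prop :=
  G.Connected ∧ ∀ e₀ : E, ∀ u w : V, Relation.ReflTransGen (G.AdjOn {e | e ≠ e₀}) u w

/-- Adjacency inside the induced subgraph on the vertex set `X`. -/
def AdjIn (G : Multigraph V E) (X : Set V) (u w : V) : Prop :=
  u ∈ X ∧ w ∈ X ∧ ∃ e, (G.src e = u ∧ G.dst e = w) ∨ (G.src e = w ∧ G.dst e = u)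

/-- Connectivity of the induced subgraph on the vertex set `X`. -/
def ConnectedOn (G : Multigraph V E) (X : Set V) : Prop :=
  ∀ u ∈ X, ∀ w ∈ X, Relation.ReflTransGen (G.AdjIn X) u w

/-- `T` is the edge set of a spanning tree of `G`:
the spanning subgraph with edge set `T` is connected and `|T| = |V| − 1`. -/
def IsSpanningTree [Fintype V] (G : Multigraph V E) (T : Finset E) : Prop :=
  (∀ u w : V, Relation.ReflTransGen (G.AdjOn (T : Set E)) u w) ∧ T.card + 1 = Fintype.card V

/-- `M` is the edge set of a spanning connected map-graph of `G`:
the spanning subgraph with edge set `M` is connected and has exactly `|V|` edges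
(equivalently, it is connected with exactly one cycle). -/
def IsConnectedSpanningMapGraph [Fintype V] (G : Multigraph V E) (M : Finset E) : Prop :=
  (∀ u w : V, Relation.ReflTransGen (G.AdjOn (M : Set E)) u w) ∧ M.card = Fintype.card V

/-- `(X, F)` describes a subgraph of `G`: every edge of `F` has both endpoints in `X`. -/
def IsSubgraphOn (G : Multigraph V E) (X : Finset V) (F : Finset E) : Prop :=
  ∀ e ∈ F, G.src e ∈ X ∧ G.dst e ∈ X

end Multigraph

/-!
Let `X` be a minimum set with `i(X) = 2|X| - 1`. Since `G - e₀` is `(2,2)`-sparse, every such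
set contains both ends of `e₀`, so by supermodularity of `i` they are closed under intersection
and all contain `X`; hence `G - e` is `(2,2)`-tight for every edge `e` spanned by `X`. As all
degrees are at least 3 and they sum to `4|V| - 2`, there are two vertices `v₁ ≠ v₂` of degree 3.
If every edge spanned by `X` met both, then `X = {v₁, v₂}` would span the three edges at `v₁`
and at `v₂`; the complement would then span `2|V| - 4` edges, which sparsity only allows when
`|V| = 2`, that is, when `G = K₂³`.
-/

namespace Multigraph

open Finset

variable {V E : Type} [Fintype E] [DecidableEq V] (G : Multigraph V E)

theorem iCount_univ [Fintype V] : G.iCount univ = Fintype.card E := by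
  simp [iCount]

theorem iCount_eq_sum (X : Finset V) :
    G.iCount X = ∑ e, if G.src e ∈ X ∧ G.dst e ∈ X then 1 else 0 := by
  rw [iCount, card_filter]

theorem sum_degree_eq_sum (X : Finset V) :
    ∑ v ∈ X, G.degree v =
      ∑ e, ((if G.src e ∈ X then 1 else 0) + if G.dst e ∈ X then 1 else 0) := by
  simp only [degree, card_filter, sum_add_distrib]
  rw [sum_comm, sum_comm (s := X)]
  simp [sum_ite_eq]

/-- Each edge spanned by `X` is counted twice on either side, each edge leaving `X` once. -/
theorem iCount_compl_add_sum_degree [Fintype V] (X : Finset V) :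
    G.iCount Xᶜ + ∑ v ∈ X, G.degree v = Fintype.card E + G.iCount X := by
  rw [iCount_eq_sum, iCount_eq_sum, sum_degree_eq_sum, ← sum_add_distrib,
    Fintype.card_eq_sum_ones, ← sum_add_distrib]
  refine sum_congr rfl fun e _ => ?_
  simp only [mem_compl]
  split_ifs <;> tauto

theorem sum_degree [Fintype V] : ∑ v, G.degree v = 2 * Fintype.card E := by
  have h := G.iCount_compl_add_sum_degree univ
  rw [compl_univ, iCount_univ] at h
  simp only [iCount, notMem_empty, false_and, filter_false, card_empty] at h
  omega

theorem iCount_le_degree {X : Finset V} {v : V}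
    (hX : ∀ e, G.src e ∈ X → G.dst e ∈ X → G.src e = v ∨ G.dst e = v) :
    G.iCount X ≤ G.degree v := by
  rw [← sum_singleton G.degree v, sum_degree_eq_sum, iCount_eq_sum]
  refine sum_le_sum fun e _ => ?_
  simp only [mem_singleton]
  split_ifs <;> grind

theorem iCount_add_iCount_le (X Y : Finset V) :
    G.iCount X + G.iCount Y ≤ G.iCount (X ∩ Y) + G.iCount (X ∪ Y) := by
  simp only [iCount_eq_sum, ← sum_add_distrib]
  refine sum_le_sum fun e _ => ?_
  simp only [mem_inter, mem_union]
  split_ifs <;> tauto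

theorem iCount_eq_add_iCount_deleteEdge [DecidableEq E] (X : Finset V) (e₀ : E) :
    G.iCount X =
      (if G.src e₀ ∈ X ∧ G.dst e₀ ∈ X then 1 else 0) + (G.deleteEdge e₀).iCount X := by
  rw [iCount_eq_sum, iCount_eq_sum, Fintype.sum_eq_add_sum_subtype_ne _ e₀]
  rfl

variable {G}

theorem Sparse.iCount_le {k l : ℤ} (hG : G.Sparse k l) {X : Finset V}
    (hX : 0 < G.iCount X) : (G.iCount X : ℤ) ≤ k * X.card - l := by
  obtain ⟨e, he⟩ := card_pos.mp hX
  exact hG X ⟨e, (mem_filter.mp he).2⟩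

section Degree

variable [Fintype V] (hT : G.Tight 2 1)
include hT

theorem Tight.two_le_degree (v : V) : 2 ≤ G.degree v := by
  by_contra! hv
  have hE := hT.2
  obtain hV | hV := Nat.lt_or_ge (Fintype.card V) 2
  · have hsum : ∑ w, G.degree w = G.degree v :=
      Fintype.sum_eq_single v fun w hw => absurd (Fintype.card_le_one_iff.mp (by omega) w v) hw
    have := G.sum_degree
    omega
  · -- deleting `v` loses at most `d(v) ≤ 1` edges, which overfills `V - v`
    have hcompl := G.iCount_compl_add_sum_degree {v}
    rw [sum_singleton] at hcompl
    have hcard : (({v}ᶜ : Finset V).card : ℤ) = Fintype.card V - 1 := by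
      rw [card_compl, card_singleton]
      omega
    have := hT.1.iCount_le (X := {v}ᶜ) (by omega)
    omega

theorem Tight.exists_ne_degree_eq_three (h3 : ∀ v, 3 ≤ G.degree v) :
    ∃ v₁ v₂, v₁ ≠ v₂ ∧ G.degree v₁ = 3 ∧ G.degree v₂ = 3 := by
  have hcount : 4 * Fintype.card V ≤ ∑ v, G.degree v + #{v | G.degree v = 3} := by
    rw [card_filter, ← sum_add_distrib, ← card_univ, mul_comm, ← smul_eq_mul, ← sum_const]
    exact sum_le_sum fun v _ => by have := h3 v; split_ifs <;> omega
  have := G.sum_degree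
  have := hT.2
  obtain ⟨v₁, h₁, v₂, h₂, hne⟩ := one_lt_card.mp (by omega : 1 < #{v | G.degree v = 3})
  exact ⟨v₁, v₂, hne, (mem_filter.mp h₁).2, (mem_filter.mp h₂).2⟩

theorem Tight.exists_isMinOverCritical : ∃ X, G.IsMinOverCritical X := by
  have huniv : univ ∈ ({X | (G.iCount X : ℤ) = 2 * X.card - 1} : Finset (Finset V)) := by
    rw [mem_filter, iCount_univ, card_univ]
    exact ⟨mem_univ _, hT.2⟩
  obtain ⟨X, hX, hmin⟩ := exists_min_image _ card ⟨_, huniv⟩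
  exact ⟨X, (mem_filter.mp hX).2, fun Y hY => hmin Y (mem_filter.mpr ⟨mem_univ _, hY⟩)⟩

theorem Tight.isK23_of_iCount_pair {v₁ v₂ : V} (hne : v₁ ≠ v₂)
    (h₁ : G.degree v₁ = 3) (h₂ : G.degree v₂ = 3) (hX : G.iCount {v₁, v₂} = 3)
    (hjoin : ∀ e, G.src e ∈ ({v₁, v₂} : Finset V) → G.dst e ∈ ({v₁, v₂} : Finset V) →
      (G.src e = v₁ ∧ G.dst e = v₂) ∨ (G.src e = v₂ ∧ G.dst e = v₁)) :
    G.IsK23 := by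
  -- no edge leaves `{v₁, v₂}`, so its complement spans `2|V| - 4` edges
  have hcompl := G.iCount_compl_add_sum_degree {v₁, v₂}
  rw [sum_pair hne, h₁, h₂, hX] at hcompl
  have hcard : (({v₁, v₂}ᶜ : Finset V).card : ℤ) = Fintype.card V - 2 := by
    have := card_le_univ ({v₁, v₂} : Finset V)
    rw [card_compl, card_pair hne] at *
    omega
  have hE := hT.2
  have hempty : ({v₁, v₂}ᶜ : Finset V) = ∅ := by
    by_contra hne'
    have := card_pos.mpr (nonempty_iff_ne_empty.mpr hne')
    have := hT.1.iCount_le (X := {v₁, v₂}ᶜ) (by omega)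
    omega
  have hmem : ∀ v, v ∈ ({v₁, v₂} : Finset V) := fun v =>
    (compl_eq_empty_iff _).mp hempty ▸ mem_univ v
  rw [hempty, card_empty] at hcard
  exact ⟨v₁, v₂, hne, fun v => by simpa using hmem v, by omega,
    fun e => hjoin e (hmem _) (hmem _)⟩

end Degree

section OverCritical

variable [DecidableEq E] {e₀ : E} (h22 : (G.deleteEdge e₀).Sparse 2 2)
include h22

theorem endpoints_mem_of_iCount_eq {X : Finset V} (hX : (G.iCount X : ℤ) = 2 * X.card - 1) :
    G.src e₀ ∈ X ∧ G.dst e₀ ∈ X := by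
  by_contra he₀
  have hdel := G.iCount_eq_add_iCount_deleteEdge X e₀
  rw [if_neg he₀, zero_add] at hdel
  have := h22.iCount_le (X := X) (by omega)
  omega

theorem iCount_inter_eq (hT : G.Sparse 2 1) {X Y : Finset V}
    (hX : (G.iCount X : ℤ) = 2 * X.card - 1) (hY : (G.iCount Y : ℤ) = 2 * Y.card - 1) :
    (G.iCount (X ∩ Y) : ℤ) = 2 * (X ∩ Y).card - 1 := by
  obtain ⟨hsX, hdX⟩ := endpoints_mem_of_iCount_eq h22 hX
  obtain ⟨hsY, hdY⟩ := endpoints_mem_of_iCount_eq h22 hY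
  have hinter := hT (X ∩ Y) ⟨e₀, mem_inter.mpr ⟨hsX, hsY⟩, mem_inter.mpr ⟨hdX, hdY⟩⟩
  have hunion := hT (X ∪ Y) ⟨e₀, mem_union_left _ hsX, mem_union_left _ hdX⟩
  have := G.iCount_add_iCount_le X Y
  have := card_inter_add_card_union X Y
  omega

theorem IsMinOverCritical.subset (hT : G.Sparse 2 1) {X Y : Finset V}
    (hX : G.IsMinOverCritical X) (hY : (G.iCount Y : ℤ) = 2 * Y.card - 1) : X ⊆ Y :=
  inter_eq_left.mp <| eq_of_subset_of_card_le inter_subset_left <|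
    hX.2 _ (iCount_inter_eq h22 hT hX.1 hY)

theorem IsMinOverCritical.deleteEdge_tight [Fintype V] (hT : G.Tight 2 1) {X : Finset V}
    (hX : G.IsMinOverCritical X) {e : E} (he : G.src e ∈ X ∧ G.dst e ∈ X) :
    (G.deleteEdge e).Tight 2 2 := by
  refine ⟨fun Y ⟨e', he'⟩ => ?_, ?_⟩
  · have hdel := G.iCount_eq_add_iCount_deleteEdge Y e
    have hsp := hT.1 Y ⟨e'.1, he'⟩
    by_cases hY : (G.iCount Y : ℤ) = 2 * Y.card - 1
    · have hXY := hX.subset h22 hT.1 hY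
      rw [if_pos ⟨hXY he.1, hXY he.2⟩] at hdel
      omega
    · split_ifs at hdel <;> omega
  · have hdel := G.iCount_eq_add_iCount_deleteEdge univ e
    rw [if_pos ⟨mem_univ _, mem_univ _⟩, iCount_univ, iCount_univ] at hdel
    have := hT.2
    omega

theorem eq_pair_of_forall_joins {X : Finset V} (hX : (G.iCount X : ℤ) = 2 * X.card - 1)
    {v₁ v₂ : V} (hne : v₁ ≠ v₂) (h₁ : G.degree v₁ = 3)
    (hjoin : ∀ e, G.src e ∈ X → G.dst e ∈ X →
      (G.src e = v₁ ∧ G.dst e = v₂) ∨ (G.src e = v₂ ∧ G.dst e = v₁)) :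
    X = {v₁, v₂} := by
  have hle : G.iCount X ≤ G.degree v₁ := G.iCount_le_degree fun e hs hd => by grind
  obtain ⟨hs₀, hd₀⟩ := endpoints_mem_of_iCount_eq h22 hX
  have hpair : {v₁, v₂} ⊆ X := by
    rcases hjoin e₀ hs₀ hd₀ with ⟨h, h'⟩ | ⟨h, h'⟩ <;> grind
  refine (eq_of_subset_of_card_le hpair ?_).symm
  rw [card_pair hne]
  omega

end OverCritical

end Multigraph

/-- A `P(2,1)`-graph not equal to `K₂³` and with no vertex of
degree 2 has a degree-3 vertex `v` and an edge `e` not incident to `v` such that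
`G − e` is `(2,2)`-tight. -/
theorem statement_10 {V E : Type} [Fintype V] [Fintype E] [DecidableEq V] [DecidableEq E]
    (G : Multigraph V E) (hG : G.IsP21) (hK : ¬ G.IsK23)
    (hdeg : ∀ v : V, G.degree v ≠ 2) :
    ∃ (v : V) (e : E), G.degree v = 3 ∧ G.src e ≠ v ∧ G.dst e ≠ v ∧
      (G.deleteEdge e).Tight 2 2 := by
  obtain ⟨hT, e₀, h22⟩ := hG
  obtain ⟨v₁, v₂, hne, h₁, h₂⟩ := hT.exists_ne_degree_eq_three fun v =>
    lt_of_le_of_ne (hT.two_le_degree v) (hdeg v).symm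
  obtain ⟨X, hX⟩ := hT.exists_isMinOverCritical
  by_contra! hno
  have hjoin : ∀ e, G.src e ∈ X → G.dst e ∈ X →
      (G.src e = v₁ ∧ G.dst e = v₂) ∨ (G.src e = v₂ ∧ G.dst e = v₁) := by
    intro e hs hd
    have htight := hX.deleteEdge_tight h22.1 hT ⟨hs, hd⟩
    have := hno v₁ e h₁
    have := hno v₂ e h₂
    grind
  obtain rfl := Multigraph.eq_pair_of_forall_joins h22.1 hX.1 hne h₁ hjoin
  have hcount : G.iCount {v₁, v₂} = 3 := by
    have := hX.1
    rw [Finset.card_pair hne] at this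
    omega
  exact hK (hT.isK23_of_iCount_pair hne h₁ h₂ hcount hjoin)
end

section
/- Let G = (V,E) be a (2,2)-circuit. Then either G = K₂³, or for every vertex v of G of degree 3 there exist two distinct vertices u, w ∈ N(v) such that the multigraph obtained from G − v by adding one new edge with endpoints u and w is a P(2,1)-graph. -/
/-! A degree-3 vertex `v` of a `(2,2)`-circuit `G` carries no loop, since a loop at `x` violates
`(2,2)`-sparsity at `{x}` of `G - e` for any other edge `e`. Deleting an edge at `v` leaves a
`(2,2)`-tight graph, so every vertex set avoiding `v` is `(2,2)`-sparse in `G`: hence `G - v`,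
which has `2|V| - 4` edges, is `(2,2)`-tight, and any `(2,2)`-tight graph plus one edge is a
`P(2,1)`-graph. Two distinct neighbours of `v` exist unless all three edges at `v` go to one
vertex `u`; then `i({u,v}) = 3 = 2·2 - 1`, and in a `(2,2)`-circuit only `V` itself is that dense,
so `G = K₂³`. -/

namespace Finset

lemma card_filter_subtype_val {α : Type} [Fintype α] (q p : α → Prop) [DecidablePred q]
    [DecidablePred p] :
    #(univ.filter fun x : {a // q a} => p x.1) = #(univ.filter fun a => q a ∧ p a) := by
  rw [← Fintype.card_subtype, ← Fintype.card_subtype]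
  exact Fintype.card_congr (Equiv.subtypeSubtypeEquivSubtypeInter q p)

end Finset

namespace Multigraph

open Finset

variable {V E : Type}

section iCount

variable [Fintype E] [DecidableEq V] (G : Multigraph V E)

lemma one_le_iCount {X : Finset V} {e : E} (he : G.src e ∈ X ∧ G.dst e ∈ X) : 1 ≤ G.iCount X :=
  card_pos.mpr ⟨e, mem_filter.mpr ⟨mem_univ e, he⟩⟩

lemma iCount_le_card (X : Finset V) : G.iCount X ≤ Fintype.card E :=
  (card_filter_le _ _).trans_eq card_univ

lemma iCount_deleteEdge_add [DecidableEq E] (e₀ : E) (X : Finset V) :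
    (G.deleteEdge e₀).iCount X + (if G.src e₀ ∈ X ∧ G.dst e₀ ∈ X then 1 else 0) =
      G.iCount X := by
  change #(univ.filter fun e : {e // e ≠ e₀} => G.src e.1 ∈ X ∧ G.dst e.1 ∈ X) + _ = _
  rw [card_filter_subtype_val (· ≠ e₀) fun e => G.src e ∈ X ∧ G.dst e ∈ X, filter_and,
    filter_ne', erase_inter, univ_inter]
  split_ifs with h
  · exact card_erase_add_one (mem_filter.mpr ⟨mem_univ e₀, h⟩)
  · rw [add_zero, erase_eq_of_notMem (by simpa using h)]
    rfl

lemma iCount_addEdge (u w : V) (X : Finset V) :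
    (G.addEdge u w).iCount X = G.iCount X + if u ∈ X ∧ w ∈ X then 1 else 0 := by
  simp only [iCount, card_filter, Fintype.sum_sum_type]
  rfl

lemma iCount_deleteEdge_addEdge [DecidableEq E] (u w : V) (X : Finset V) :
    ((G.addEdge u w).deleteEdge (Sum.inr ())).iCount X = G.iCount X := by
  have h := (G.addEdge u w).iCount_deleteEdge_add (Sum.inr ()) X
  rw [iCount_addEdge] at h
  exact Nat.add_right_cancel h

lemma iCount_deleteVertex (v : V) (X : Finset {a : V // a ≠ v}) :
    (G.deleteVertex v).iCount X = G.iCount (X.map (Function.Embedding.subtype _)) := by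
  change #(univ.filter fun e : {e // G.src e ≠ v ∧ G.dst e ≠ v} =>
    (⟨G.src e.1, e.2.1⟩ : {a // a ≠ v}) ∈ X ∧ (⟨G.dst e.1, e.2.2⟩ : {a // a ≠ v}) ∈ X) = _
  simp_rw [← mem_map' (Function.Embedding.subtype _), Function.Embedding.subtype_apply]
  refine (card_filter_subtype_val (fun e => G.src e ≠ v ∧ G.dst e ≠ v)
    fun e => G.src e ∈ X.map (Function.Embedding.subtype _) ∧
      G.dst e ∈ X.map (Function.Embedding.subtype _)).trans
    (congrArg card (filter_congr fun e _ => and_iff_right_of_imp fun he => ?_))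
  exact ⟨property_of_mem_map_subtype X he.1, property_of_mem_map_subtype X he.2⟩

def incidenceFinset (v : V) : Finset E :=
  univ.filter fun e => G.src e = v ∨ G.dst e = v

lemma degree_le_two_mul_card (v : V) : G.degree v ≤ 2 * Fintype.card E := by
  have h₁ := card_filter_le (univ : Finset E) fun e => G.src e = v
  have h₂ := card_filter_le (univ : Finset E) fun e => G.dst e = v
  rw [card_univ] at h₁ h₂
  unfold degree
  omega

lemma card_incidenceFinset (hloop : ∀ e, G.src e ≠ G.dst e) (v : V) :
    #(G.incidenceFinset v) = G.degree v := by
  classical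
  rw [incidenceFinset, filter_or,
    card_union_of_disjoint (disjoint_filter.mpr fun e _ h₁ h₂ => hloop e (h₁.trans h₂.symm))]
  rfl

lemma card_edges_deleteVertex_add (v : V) :
    Fintype.card {e // G.src e ≠ v ∧ G.dst e ≠ v} + #(G.incidenceFinset v) = Fintype.card E := by
  rw [Fintype.card_subtype, incidenceFinset, add_comm]
  simp only [← not_or]
  exact card_filter_add_card_filter_not _

variable {G}

lemma Sparse.one_le {k l : ℤ} (hG : G.Sparse k l) {X : Finset V}
    (hX : ∃ e, G.src e ∈ X ∧ G.dst e ∈ X) : 1 ≤ k * #X - l := by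
  obtain ⟨e, he⟩ := hX
  exact (Int.ofNat_le.mpr (G.one_le_iCount he)).trans (hG X ⟨e, he⟩)

lemma Sparse.src_ne_dst (hG : G.Sparse 2 2) (e : E) : G.src e ≠ G.dst e := by
  intro h
  have := hG.one_le (X := {G.src e}) ⟨e, by simp [h]⟩
  simp at this

lemma Sparse.addEdge {k l : ℤ} (hG : G.Sparse k l) (hlk : l ≤ k) (hk : 0 ≤ k) (u w : V) :
    (G.addEdge u w).Sparse k (l - 1) := by
  rintro X ⟨e, he⟩
  have hX : 1 ≤ #X := card_pos.mpr ⟨_, he.1⟩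
  have hkX : k ≤ k * #X := le_mul_of_one_le_right hk (by exact_mod_cast hX)
  rw [iCount_addEdge]
  by_cases hspan : ∃ e, G.src e ∈ X ∧ G.dst e ∈ X
  · have := hG X hspan
    split_ifs <;> push_cast <;> omega
  · have : G.iCount X = 0 := by
      push Not at hspan
      exact card_eq_zero.mpr (filter_eq_empty_iff.mpr fun e _ h => hspan e h.1 h.2)
    rw [this]
    split_ifs <;> push_cast <;> omega

lemma Sparse.deleteEdge_addEdge [DecidableEq E] {k l : ℤ} (hG : G.Sparse k l) (u w : V) :
    ((G.addEdge u w).deleteEdge (Sum.inr ())).Sparse k l := by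
  rintro X ⟨⟨e | _, hne⟩, he⟩
  · rw [iCount_deleteEdge_addEdge]
    exact hG X ⟨e, he⟩
  · exact absurd rfl hne

end iCount

section Tight

variable [Fintype V] [Fintype E] [DecidableEq V] {G : Multigraph V E}

lemma Tight.addEdge {k l : ℤ} (hG : G.Tight k l) (hlk : l ≤ k) (hk : 0 ≤ k) (u w : V) :
    (G.addEdge u w).Tight k (l - 1) := by
  refine ⟨hG.1.addEdge hlk hk u w, ?_⟩
  rw [Fintype.card_sum, Fintype.card_unit]
  push_cast
  linarith [hG.2]

lemma Tight.deleteEdge_addEdge [DecidableEq E] {k l : ℤ} (hG : G.Tight k l) (u w : V) :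
    ((G.addEdge u w).deleteEdge (Sum.inr ())).Tight k l := by
  refine ⟨hG.1.deleteEdge_addEdge u w, ?_⟩
  rw [Fintype.card_subtype_compl, Fintype.card_subtype_eq, Fintype.card_sum, Fintype.card_unit,
    Nat.add_sub_cancel]
  exact hG.2

lemma Tight.isP21_addEdge [DecidableEq E] (hG : G.Tight 2 2) (u w : V) :
    (G.addEdge u w).IsP21 :=
  ⟨hG.addEdge (by norm_num) (by norm_num) u w, Sum.inr (), hG.deleteEdge_addEdge u w⟩

end Tight

section Circuit

variable [Fintype V] [Fintype E] [DecidableEq V] [DecidableEq E] {G : Multigraph V E}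

lemma IsCircuit22.src_ne_dst (hG : G.IsCircuit22) (hE : 2 ≤ Fintype.card E) (e : E) :
    G.src e ≠ G.dst e := by
  obtain ⟨e', he'⟩ := Fintype.exists_ne_of_one_lt_card hE e
  exact (hG.2 e').1.src_ne_dst ⟨e, he'.symm⟩

lemma IsCircuit22.iCount_le_of_not_spans (hG : G.IsCircuit22) {X : Finset V}
    (hX : ∃ e, G.src e ∈ X ∧ G.dst e ∈ X) {e₀ : E} (he₀ : ¬(G.src e₀ ∈ X ∧ G.dst e₀ ∈ X)) :
    (G.iCount X : ℤ) ≤ 2 * #X - 2 := by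
  obtain ⟨e, he⟩ := hX
  have hne : e ≠ e₀ := by
    rintro rfl
    exact he₀ he
  have := (hG.2 e₀).1 X ⟨⟨e, hne⟩, he⟩
  rwa [← G.iCount_deleteEdge_add e₀ X, if_neg he₀, add_zero]

lemma IsCircuit22.spans_of_le_iCount (hG : G.IsCircuit22) {X : Finset V} (hX : X.Nonempty)
    (h : 2 * #X - 1 ≤ (G.iCount X : ℤ)) (e : E) : G.src e ∈ X ∧ G.dst e ∈ X := by
  by_contra he
  have hpos : 0 < G.iCount X := by
    have := card_pos.mpr hX
    omega
  obtain ⟨f, hf⟩ := card_pos.mp hpos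
  have := hG.iCount_le_of_not_spans ⟨f, (mem_filter.mp hf).2⟩ he
  omega

lemma IsCircuit22.eq_univ_of_le_iCount (hG : G.IsCircuit22) (hE : 2 ≤ Fintype.card E)
    {X : Finset V} (hX : X.Nonempty) (h : 2 * #X - 1 ≤ (G.iCount X : ℤ)) : X = univ := by
  have hall := hG.spans_of_le_iCount hX h
  obtain ⟨e₀⟩ : Nonempty E := Fintype.card_pos_iff.mp (by omega)
  obtain ⟨e₁, he₁⟩ := Fintype.exists_ne_of_one_lt_card hE e₀
  have hsparse := (hG.2 e₀).1 X ⟨⟨e₁, he₁⟩, hall e₁⟩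
  have hdel := G.iCount_deleteEdge_add e₀ X
  have hi : G.iCount X = Fintype.card E := by
    rw [iCount, filter_true_of_mem fun e _ => hall e, card_univ]
  rw [if_pos (hall e₀), hi] at hdel
  have hV := card_le_univ X
  have hcard := hG.1
  exact eq_univ_of_card X (by omega)

lemma IsCircuit22.isK23_of_three_le_iCount (hG : G.IsCircuit22) {u v : V} (huv : u ≠ v)
    (h : 3 ≤ G.iCount {u, v}) : G.IsK23 := by
  have hE : 3 ≤ Fintype.card E := h.trans (G.iCount_le_card _)
  have hpair : #{u, v} = 2 := card_pair huv
  have huniv := hG.eq_univ_of_le_iCount (by omega) (insert_nonempty _ _) (by rw [hpair]; omega)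
  have hmem : ∀ x, x = u ∨ x = v := fun x => by
    have hx : x ∈ ({u, v} : Finset V) := huniv ▸ mem_univ x
    simpa using hx
  have hV : Fintype.card V = 2 := by rw [← card_univ, ← huniv, hpair]
  refine ⟨u, v, huv, hmem, by have := hG.1; omega, fun e => ?_⟩
  have hloop := hG.src_ne_dst (by omega) e
  rcases hmem (G.src e) with hs | hs <;> rcases hmem (G.dst e) with hd | hd <;> simp_all

lemma IsCircuit22.sparse_deleteVertex (hG : G.IsCircuit22) {v : V}
    (hv : (G.incidenceFinset v).Nonempty) : (G.deleteVertex v).Sparse 2 2 := by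
  obtain ⟨e₀, he₀⟩ := hv
  rintro X ⟨e, he⟩
  rw [iCount_deleteVertex, ← card_map (Function.Embedding.subtype _)]
  refine hG.iCount_le_of_not_spans (e₀ := e₀)
    ⟨e.1, (mem_map' _).mpr he.1, (mem_map' _).mpr he.2⟩ ?_
  rintro ⟨hs, hd⟩
  rcases (mem_filter.mp he₀).2 with h | h
  · exact property_of_mem_map_subtype X hs h
  · exact property_of_mem_map_subtype X hd h

lemma IsCircuit22.tight_deleteVertex (hG : G.IsCircuit22) {v : V} (hv : G.degree v = 3) :
    (G.deleteVertex v).Tight 2 2 := by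
  have hloop := hG.src_ne_dst (by have := G.degree_le_two_mul_card v; omega)
  have hinc := G.card_incidenceFinset hloop v
  refine ⟨hG.sparse_deleteVertex (card_pos.mp (by omega)), ?_⟩
  have hedges := G.card_edges_deleteVertex_add v
  have hV : 1 ≤ Fintype.card V := Fintype.card_pos_iff.mpr ⟨v⟩
  have hcard := hG.1
  rw [Fintype.card_subtype_compl, Fintype.card_subtype_eq]
  push_cast [hV]
  omega

lemma IsCircuit22.exists_ne_mem_neighborSet (hG : G.IsCircuit22) (hK : ¬G.IsK23) {v : V}
    (hv : G.degree v = 3) : ∃ u w, u ∈ G.neighborSet v ∧ w ∈ G.neighborSet v ∧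
      u ≠ v ∧ w ≠ v ∧ u ≠ w := by
  have hloop := hG.src_ne_dst (by have := G.degree_le_two_mul_card v; omega)
  have hinc := G.card_incidenceFinset hloop v
  have hN : ∀ e ∈ G.incidenceFinset v, ∃ u ∈ G.neighborSet v,
      u ≠ v ∧ G.src e ∈ ({u, v} : Finset V) ∧ G.dst e ∈ ({u, v} : Finset V) := by
    intro e he
    rcases (mem_filter.mp he).2 with h | h
    · exact ⟨G.dst e, ⟨e, Or.inl ⟨h, rfl⟩⟩, h ▸ (hloop e).symm, by simp [h]⟩
    · exact ⟨G.src e, ⟨e, Or.inr ⟨rfl, h⟩⟩, h ▸ hloop e, by simp [h]⟩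
  obtain ⟨e₁, he₁⟩ := card_pos.mp (by omega : 0 < #(G.incidenceFinset v))
  obtain ⟨u, hu, huv, -⟩ := hN e₁ he₁
  by_contra! hsame
  refine hK (hG.isK23_of_three_le_iCount huv ?_)
  calc 3 = #(G.incidenceFinset v) := by omega
    _ ≤ G.iCount {u, v} := card_le_card fun e he => mem_filter.mpr ⟨mem_univ e, ?_⟩
  obtain ⟨w, hw, hwv, hspan⟩ := hN e he
  rwa [hsame w u hw hu hwv huv] at hspan

end Circuit

end Multigraph

/-- For a `(2,2)`-circuit `G`, either `G = K₂³` or for every degree-3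
vertex `v` there are distinct `u, w ∈ N(v)` such that `G − v` plus a new edge `uw` is a
`P(2,1)`-graph. -/
theorem statement_12 {V E : Type} [Fintype V] [Fintype E] [DecidableEq V] [DecidableEq E]
    (G : Multigraph V E) (hG : G.IsCircuit22) :
    G.IsK23 ∨
      ∀ v : V, G.degree v = 3 →
        ∃ u w : {a : V // a ≠ v}, (u : V) ∈ G.neighborSet v ∧ (w : V) ∈ G.neighborSet v ∧
          u ≠ w ∧ ((G.deleteVertex v).addEdge u w).IsP21 := by
  refine or_iff_not_imp_left.mpr fun hK v hv => ?_
  obtain ⟨u, w, hu, hw, huv, hwv, hne⟩ := hG.exists_ne_mem_neighborSet hK hv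
  exact ⟨⟨u, huv⟩, ⟨w, hwv⟩, hu, hw, fun h => hne (congrArg Subtype.val h),
    (hG.tight_deleteVertex hv).isP21_addEdge _ _⟩
end
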